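/- Let R be a unital ring, n ≥ 2, M a 2-torsion free unital Mₙ(R)-bimodule, and Δ : Mₙ(R) → M an additive map satisfying: AB = BA = 0 implies Δ(A)B + AΔ(B) + Δ(B)A + BΔ(A) = 0, with EΔ(E)F = FΔ(E)E = 0 where E = E₁₁, F = 1 - E₁₁. Then Δ(1) commutes with every A ∈ Mₙ(R): A·Δ(1) = Δ(1)·A. -/

import Mathlib

/-- A (not necessarily unital) bimodule structure of a ring `A` on an
additive group `M`, given by a left action `l` and a right action `r`. -/
structure RingBimod (A M : Type*) [Ring A] [AddCommGroup M] where
  l : A → M → M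
  r : M → A → M
  l_add : ∀ a m₁ m₂, l a (m₁ + m₂) = l a m₁ + l a m₂
  add_l : ∀ a₁ a₂ m, l (a₁ + a₂) m = l a₁ m + l a₂ m
  r_add : ∀ m₁ m₂ a, r (m₁ + m₂) a = r m₁ a + r m₂ a
  add_r : ∀ m a₁ a₂, r m (a₁ + a₂) = r m a₁ + r m a₂
  mul_l : ∀ a₁ a₂ m, l (a₁ * a₂) m = l a₁ (l a₂ m)
  r_mul : ∀ m a₁ a₂, r m (a₁ * a₂) = r (r m a₁) a₂
  l_r : ∀ a₁ m a₂, l a₁ (r m a₂) = r (l a₁ m) a₂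

/-!
Put `e = E₁₁` and `f = 1 - e`. Sandwiching the zero-product identity for the pair `(e, f)`
between `e`'s and `f`'s and using 2-torsion freeness together with `e Δ(e) f = f Δ(e) e = 0`
gives `Δ e ∈ e M e` and `Δ f ∈ f M f`. For `p ∈ e A f` the pairs `(e ± p, f ∓ p)` also multiply
to zero both ways; the difference of the two identities, halved, and sandwiched between `e` and
`f` gives `Δ(e) p = p Δ(f)`, which says that `p` commutes with `Δ 1 = Δ e + Δ f`; symmetrically
for `f A e`. The elements commuting with `Δ 1` form a non-unital subring, and since `n ≥ 2` the
blocks `e A f` and `f A e` generate `Mₙ(R)` as a ring: `E₁₁ = E₁₂ E₂₁` and `Eᵢⱼ = Eᵢ₁ E₁ⱼ`.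
-/

theorem IsIdempotentElem.orthogonal_of_add_eq_one {A : Type*} [Ring A] {e f : A}
    (he : IsIdempotentElem e) (hsum : e + f = 1) :
    IsIdempotentElem f ∧ e * f = 0 ∧ f * e = 0 := by
  obtain rfl : f = 1 - e := eq_sub_of_add_eq' hsum
  exact ⟨he.one_sub, he.mul_one_sub_self, he.one_sub_mul_self⟩

namespace RingBimod

variable {A M : Type*} [Ring A] [AddCommGroup M] (bm : RingBimod A M)

theorem l_zero (a : A) : bm.l a 0 = 0 := (AddMonoidHom.mk' (bm.l a) (bm.l_add a)).map_zero

theorem zero_l (m : M) : bm.l 0 m = 0 :=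
  (AddMonoidHom.mk' (bm.l · m) (bm.add_l · · m)).map_zero

theorem r_zero (m : M) : bm.r m 0 = 0 := (AddMonoidHom.mk' (bm.r m) (bm.add_r m)).map_zero

theorem zero_r (a : A) : bm.r 0 a = 0 :=
  (AddMonoidHom.mk' (bm.r · a) (bm.r_add · · a)).map_zero

theorem l_sub (a : A) (m₁ m₂ : M) : bm.l a (m₁ - m₂) = bm.l a m₁ - bm.l a m₂ :=
  (AddMonoidHom.mk' (bm.l a) (bm.l_add a)).map_sub m₁ m₂

theorem sub_l (a₁ a₂ : A) (m : M) : bm.l (a₁ - a₂) m = bm.l a₁ m - bm.l a₂ m :=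
  (AddMonoidHom.mk' (bm.l · m) (bm.add_l · · m)).map_sub a₁ a₂

theorem r_sub (m₁ m₂ : M) (a : A) : bm.r (m₁ - m₂) a = bm.r m₁ a - bm.r m₂ a :=
  (AddMonoidHom.mk' (bm.r · a) (bm.r_add · · a)).map_sub m₁ m₂

theorem sub_r (m : M) (a₁ a₂ : A) : bm.r m (a₁ - a₂) = bm.r m a₁ - bm.r m a₂ :=
  (AddMonoidHom.mk' (bm.r m) (bm.add_r m)).map_sub a₁ a₂

theorem l_add_l_of_add_eq_one (hunit : ∀ m : M, bm.l 1 m = m ∧ bm.r m 1 = m) {e f : A}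
    (hsum : e + f = 1) (m : M) : bm.l e m + bm.l f m = m := by
  rw [← bm.add_l, hsum, (hunit m).1]

theorem r_add_r_of_add_eq_one (hunit : ∀ m : M, bm.l 1 m = m ∧ bm.r m 1 = m) {e f : A}
    (hsum : e + f = 1) (m : M) : bm.r m e + bm.r m f = m := by
  rw [← bm.add_r, hsum, (hunit m).2]

/-- With the Jordan product `x ∘ y = x y + y x` this is `Δ a ∘ b + a ∘ Δ b`. -/
def jordanLeibniz (Δ : A →+ M) (a b : A) : M :=
  bm.r (Δ a) b + bm.l a (Δ b) + bm.r (Δ b) a + bm.l b (Δ a)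

variable (Δ : A →+ M)

theorem jordanLeibniz_add_left (a₁ a₂ b : A) :
    bm.jordanLeibniz Δ (a₁ + a₂) b = bm.jordanLeibniz Δ a₁ b + bm.jordanLeibniz Δ a₂ b := by
  simp only [jordanLeibniz, map_add, bm.add_l, bm.l_add, bm.add_r, bm.r_add]; abel

theorem jordanLeibniz_sub_left (a₁ a₂ b : A) :
    bm.jordanLeibniz Δ (a₁ - a₂) b = bm.jordanLeibniz Δ a₁ b - bm.jordanLeibniz Δ a₂ b := by
  simp only [jordanLeibniz, map_sub, bm.sub_l, bm.l_sub, bm.sub_r, bm.r_sub]; abel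

theorem jordanLeibniz_add_right (a b₁ b₂ : A) :
    bm.jordanLeibniz Δ a (b₁ + b₂) = bm.jordanLeibniz Δ a b₁ + bm.jordanLeibniz Δ a b₂ := by
  simp only [jordanLeibniz, map_add, bm.add_l, bm.l_add, bm.add_r, bm.r_add]; abel

theorem jordanLeibniz_sub_right (a b₁ b₂ : A) :
    bm.jordanLeibniz Δ a (b₁ - b₂) = bm.jordanLeibniz Δ a b₁ - bm.jordanLeibniz Δ a b₂ := by
  simp only [jordanLeibniz, map_sub, bm.sub_l, bm.l_sub, bm.sub_r, bm.r_sub]; abel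

theorem l_r_jordanLeibniz (x y a b : A) :
    bm.l x (bm.r (bm.jordanLeibniz Δ a b) y) =
      bm.l x (bm.r (Δ a) (b * y)) + bm.l (x * a) (bm.r (Δ b) y) +
        bm.l x (bm.r (Δ b) (a * y)) + bm.l (x * b) (bm.r (Δ a) y) := by
  simp only [jordanLeibniz, bm.r_add, bm.l_add, bm.r_mul, bm.mul_l, bm.l_r]

theorem jordanLeibniz_left_eq_right (htf : ∀ m : M, m + m = 0 → m = 0)
    (hΔ : ∀ a b, a * b = 0 → b * a = 0 → bm.jordanLeibniz Δ a b = 0) {a b p : A}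
    (h₁ : (a + p) * (b - p) = 0) (h₂ : (b - p) * (a + p) = 0)
    (h₃ : (a - p) * (b + p) = 0) (h₄ : (b + p) * (a - p) = 0) :
    bm.jordanLeibniz Δ a p = bm.jordanLeibniz Δ p b := by
  have hplus := hΔ _ _ h₁ h₂
  have hminus := hΔ _ _ h₃ h₄
  simp only [jordanLeibniz_add_left, jordanLeibniz_sub_left, jordanLeibniz_add_right,
    jordanLeibniz_sub_right] at hplus hminus
  rw [← sub_eq_zero]
  apply htf
  linear_combination (norm := abel) hminus - hplus

theorem off_diagonal_map_eq_zero (htf : ∀ m : M, m + m = 0 → m = 0)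
    (hunit : ∀ m : M, bm.l 1 m = m ∧ bm.r m 1 = m)
    (hΔ : ∀ a b, a * b = 0 → b * a = 0 → bm.jordanLeibniz Δ a b = 0) {e f : A}
    (he : IsIdempotentElem e) (hsum : e + f = 1)
    (h₁ : bm.l e (bm.r (Δ e) f) = 0) (h₂ : bm.l f (bm.r (Δ e) e) = 0) :
    bm.l e (Δ f) = 0 ∧ bm.r (Δ f) e = 0 ∧ bm.l f (Δ e) = 0 ∧ bm.r (Δ e) f = 0 := by
  obtain ⟨hf, hef, hfe⟩ := he.orthogonal_of_add_eq_one hsum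
  have sandwich (x y : A) : bm.l x (bm.r (Δ e) (f * y)) + bm.l (x * e) (bm.r (Δ f) y) +
      bm.l x (bm.r (Δ f) (e * y)) + bm.l (x * f) (bm.r (Δ e) y) = 0 := by
    rw [← bm.l_r_jordanLeibniz, hΔ e f hef hfe, bm.zero_r, bm.l_zero]
  have hee : bm.l e (bm.r (Δ f) e) = 0 := htf _ <| by
    simpa only [hfe, hef, he.eq, bm.r_zero, bm.l_zero, bm.zero_l, zero_add, add_zero]
      using sandwich e e
  have hff : bm.l f (bm.r (Δ e) f) = 0 := htf _ <| by
    simpa only [hfe, hef, hf.eq, bm.r_zero, bm.l_zero, bm.zero_l, zero_add, add_zero]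
      using sandwich f f
  have hef' : bm.l e (bm.r (Δ f) f) = 0 := by
    simpa only [hfe, hef, he.eq, hf.eq, h₁, bm.r_zero, bm.l_zero, bm.zero_l, zero_add,
      add_zero] using sandwich e f
  have hfe' : bm.l f (bm.r (Δ f) e) = 0 := by
    simpa only [hfe, hef, he.eq, hf.eq, h₂, bm.r_zero, bm.l_zero, bm.zero_l, zero_add,
      add_zero] using sandwich f e
  refine ⟨?_, ?_, ?_, ?_⟩
  · rw [← bm.r_add_r_of_add_eq_one hunit hsum (bm.l e (Δ f)), ← bm.l_r, ← bm.l_r, hee, hef',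
      add_zero]
  · rw [← bm.l_add_l_of_add_eq_one hunit hsum (bm.r (Δ f) e), hee, hfe', add_zero]
  · rw [← bm.r_add_r_of_add_eq_one hunit hsum (bm.l f (Δ e)), ← bm.l_r, ← bm.l_r, h₂, hff,
      add_zero]
  · rw [← bm.l_add_l_of_add_eq_one hunit hsum (bm.r (Δ e) f), h₁, hff, add_zero]

theorem r_map_eq_l_map_of_mem_corner (htf : ∀ m : M, m + m = 0 → m = 0)
    (hunit : ∀ m : M, bm.l 1 m = m ∧ bm.r m 1 = m)
    (hΔ : ∀ a b, a * b = 0 → b * a = 0 → bm.jordanLeibniz Δ a b = 0) {e f : A}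
    (he : IsIdempotentElem e) (hsum : e + f = 1)
    (hef_l : bm.l e (Δ f) = 0) (hfe_r : bm.r (Δ f) e = 0)
    (hfe_l : bm.l f (Δ e) = 0) (hef_r : bm.r (Δ e) f = 0)
    {p : A} (hep : e * p = p) (hpf : p * f = p) :
    bm.r (Δ e) p = bm.l p (Δ f) := by
  obtain ⟨hf, hef, hfe⟩ := he.orthogonal_of_add_eq_one hsum
  have hfp : f * p = 0 := by rw [← hep, ← mul_assoc, hfe, zero_mul]
  have hpe : p * e = 0 := by rw [← hpf, mul_assoc, hfe, mul_zero]
  have hpp : p * p = 0 := by nth_rw 1 [← hpf]; rw [mul_assoc, hfp, mul_zero]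
  have hD : bm.jordanLeibniz Δ e p = bm.jordanLeibniz Δ p f :=
    bm.jordanLeibniz_left_eq_right Δ htf hΔ
      (by simp only [add_mul, mul_sub, hef, hep, hpf, hpp]; abel)
      (by simp only [sub_mul, mul_add, hfe, hfp, hpe, hpp]; abel)
      (by simp only [sub_mul, mul_add, hef, hep, hpf, hpp]; abel)
      (by simp only [add_mul, mul_sub, hfe, hfp, hpe, hpp]; abel)
  have hΔe : bm.l e (Δ e) = Δ e := by
    simpa only [hfe_l, add_zero] using bm.l_add_l_of_add_eq_one hunit hsum (Δ e)
  have hΔf : bm.r (Δ f) f = Δ f := by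
    simpa only [hfe_r, zero_add] using bm.r_add_r_of_add_eq_one hunit hsum (Δ f)
  have h := congrArg (fun m => bm.l e (bm.r m f)) hD
  simp only [bm.l_r_jordanLeibniz, hf.eq, he.eq, hef, hep, hpf, hef_r, hΔf, bm.l_r e (Δ e),
    bm.l_r e (Δ f), hΔe, hef_l, bm.r_zero, bm.zero_r, bm.l_zero, bm.zero_l, add_zero] at h
  exact add_right_cancel (h.trans (add_comm _ _))

def centralizer (m : M) : NonUnitalSubsemiring A where
  carrier := {a | bm.l a m = bm.r m a}
  zero_mem' := (bm.zero_l m).trans (bm.r_zero m).symm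
  add_mem' {a b} (ha : bm.l a m = bm.r m a) (hb : bm.l b m = bm.r m b) := by
    change bm.l (a + b) m = bm.r m (a + b)
    rw [bm.add_l, ha, hb, bm.add_r]
  mul_mem' {a b} (ha : bm.l a m = bm.r m a) (hb : bm.l b m = bm.r m b) := by
    change bm.l (a * b) m = bm.r m (a * b)
    rw [bm.mul_l, hb, bm.l_r, ha, bm.r_mul]

theorem mem_centralizer_iff {m : M} {a : A} : a ∈ bm.centralizer m ↔ bm.l a m = bm.r m a :=
  Iff.rfl

theorem mem_centralizer_map_one_of_mem_corner (htf : ∀ m : M, m + m = 0 → m = 0)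
    (hunit : ∀ m : M, bm.l 1 m = m ∧ bm.r m 1 = m)
    (hΔ : ∀ a b, a * b = 0 → b * a = 0 → bm.jordanLeibniz Δ a b = 0) {e f : A}
    (he : IsIdempotentElem e) (hsum : e + f = 1)
    (hef_l : bm.l e (Δ f) = 0) (hfe_r : bm.r (Δ f) e = 0)
    (hfe_l : bm.l f (Δ e) = 0) (hef_r : bm.r (Δ e) f = 0)
    {p : A} (hep : e * p = p) (hpf : p * f = p) :
    p ∈ bm.centralizer (Δ 1) := by
  have hpΔe : bm.l p (Δ e) = 0 := by rw [← hpf, bm.mul_l, hfe_l, bm.l_zero]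
  have hΔfp : bm.r (Δ f) p = 0 := by rw [← hep, bm.r_mul, hfe_r, bm.zero_r]
  rw [mem_centralizer_iff, ← hsum, map_add, bm.l_add, bm.r_add, hpΔe, hΔfp, zero_add, add_zero,
    bm.r_map_eq_l_map_of_mem_corner Δ htf hunit hΔ he hsum hef_l hfe_r hfe_l hef_r hep hpf]

theorem mem_centralizer_map_one_of_mem_off_diagonal (htf : ∀ m : M, m + m = 0 → m = 0)
    (hunit : ∀ m : M, bm.l 1 m = m ∧ bm.r m 1 = m)
    (hΔ : ∀ a b, a * b = 0 → b * a = 0 → bm.jordanLeibniz Δ a b = 0) {e f : A}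
    (he : IsIdempotentElem e) (hsum : e + f = 1)
    (h₁ : bm.l e (bm.r (Δ e) f) = 0) (h₂ : bm.l f (bm.r (Δ e) e) = 0) {p : A}
    (hp : e * p = p ∧ p * f = p ∨ f * p = p ∧ p * e = p) :
    p ∈ bm.centralizer (Δ 1) := by
  obtain ⟨hef_l, hfe_r, hfe_l, hef_r⟩ := bm.off_diagonal_map_eq_zero Δ htf hunit hΔ he hsum h₁ h₂
  obtain ⟨hf, -⟩ := he.orthogonal_of_add_eq_one hsum
  rcases hp with ⟨hep, hpf⟩ | ⟨hfp, hpe⟩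
  · exact bm.mem_centralizer_map_one_of_mem_corner Δ htf hunit hΔ he hsum
      hef_l hfe_r hfe_l hef_r hep hpf
  · exact bm.mem_centralizer_map_one_of_mem_corner Δ htf hunit hΔ hf ((add_comm f e).trans hsum)
      hfe_l hef_r hef_l hfe_r hfp hpe

end RingBimod

namespace Matrix

variable {ι R : Type*} [Fintype ι] [DecidableEq ι] [Ring R]

theorem nonUnitalSubsemiring_eq_top_of_single_mem (S : NonUnitalSubsemiring (Matrix ι ι R))
    {i₀ i₁ : ι} (h₁₀ : i₁ ≠ i₀) (hrow : ∀ j ≠ i₀, ∀ c, single i₀ j c ∈ S)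
    (hcol : ∀ i ≠ i₀, ∀ c, single i i₀ c ∈ S) : S = ⊤ := by
  have hsingle (i j : ι) (c : R) : single i j c ∈ S := by
    by_cases hi : i = i₀ <;> by_cases hj : j = i₀
    · rw [hi, hj, ← mul_one c, ← single_mul_single_same c i₀ i₁ i₀ 1]
      exact S.mul_mem (hrow i₁ h₁₀ c) (hcol i₁ h₁₀ 1)
    · exact hi ▸ hrow j hj c
    · exact hj ▸ hcol i hi c
    · rw [← one_mul c, ← single_mul_single_same 1 i i₀ j c]
      exact S.mul_mem (hcol i hi 1) (hrow j hj c)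
  refine eq_top_iff.mpr fun A _ => ?_
  rw [matrix_eq_sum_single A]
  exact sum_mem fun i _ => sum_mem fun j _ => hsingle i j (A i j)

end Matrix

theorem stmt7 (R : Type*) [Ring R] (n : ℕ) (hn : 2 ≤ n)
    (M : Type*) [AddCommGroup M] (bm : RingBimod (Matrix (Fin n) (Fin n) R) M)
    (hunit : ∀ m : M, bm.l 1 m = m ∧ bm.r m 1 = m)
    (htf : ∀ m : M, m + m = 0 → m = 0)
    (Δ : Matrix (Fin n) (Fin n) R → M)
    (hadd : ∀ A B, Δ (A + B) = Δ A + Δ B)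
    (hΔ : ∀ A B, A * B = 0 → B * A = 0 →
      bm.r (Δ A) B + bm.l A (Δ B) + bm.r (Δ B) A + bm.l B (Δ A) = 0)
    (E F : Matrix (Fin n) (Fin n) R)
    (hE : E = Matrix.single ⟨0, by omega⟩ ⟨0, by omega⟩ (1 : R))
    (hF : F = 1 - E)
    (hEF1 : bm.l E (bm.r (Δ E) F) = 0) (hEF2 : bm.l F (bm.r (Δ E) E) = 0) :
    ∀ A : Matrix (Fin n) (Fin n) R,
      bm.l A (Δ 1) = bm.r (Δ 1) A := by
  set i₀ : Fin n := ⟨0, by omega⟩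
  have he : IsIdempotentElem E := by
    rw [hE, IsIdempotentElem, Matrix.single_mul_single_same, one_mul]
  have hsum : E + F = 1 := by rw [hF, add_sub_cancel]
  have hcorner (p : Matrix (Fin n) (Fin n) R)
      (hp : E * p = p ∧ p * F = p ∨ F * p = p ∧ p * E = p) : p ∈ bm.centralizer (Δ 1) :=
    bm.mem_centralizer_map_one_of_mem_off_diagonal (AddMonoidHom.mk' Δ hadd) htf hunit hΔ he hsum
      hEF1 hEF2 hp
  have hrow (j : Fin n) (hj : j ≠ i₀) (c : R) : Matrix.single i₀ j c ∈ bm.centralizer (Δ 1) :=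
    hcorner _ <| .inl ⟨by rw [hE, Matrix.single_mul_single_same, one_mul],
      by rw [hF, mul_sub, mul_one, hE, Matrix.single_mul_single_of_ne (h := hj), sub_zero]⟩
  have hcol (i : Fin n) (hi : i ≠ i₀) (c : R) : Matrix.single i i₀ c ∈ bm.centralizer (Δ 1) :=
    hcorner _ <| .inr ⟨by
      rw [hF, sub_mul, one_mul, hE, Matrix.single_mul_single_of_ne (h := hi.symm), sub_zero],
      by rw [hE, Matrix.single_mul_single_same, mul_one]⟩
  have htop : bm.centralizer (Δ 1) = ⊤ :=
    Matrix.nonUnitalSubsemiring_eq_top_of_single_mem _ (i₁ := ⟨1, by omega⟩)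
      (by simp [i₀, Fin.ext_iff]) hrow hcol
  exact fun A => (htop ▸ NonUnitalSubsemiring.mem_top A : A ∈ bm.centralizer (Δ 1))
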